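/- arXiv:1305.2644 — 5 statements merged into one kernel-verified Lean document; each statement's English description precedes it below -/
import Mathlib

section
/- Let 𝓤 be a quasi-definite normalized vector of linear functionals (so 𝓤(𝓟₀) = I₂) with moments 𝓤ₙ = 𝓤(x^{2n}𝓟₀), and let 𝓕(z) = Σ_{n≥0} 𝓤ₙ / z^{n+1} be the generalized Markov function (convergent for |z| > R for some R). If the moments satisfy d𝓤ₙ/dt = 𝓤ₙ₊₁ − 𝓤ₙ·𝓤₁ for all n, then 𝓕 satisfies the Riccati-type differential equation d𝓕(z)/dt = 𝓕(z)·(z·I₂ − 𝓤₁) − I₂ for all |z| > R. -/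
/-!
Differentiating `𝓕(z) = ∑ 𝓤ₙ / zⁿ⁺¹` term by term is legitimate because for `R < |z|` the bound
`‖𝓤ₙ‖ ≤ K Rⁿ` makes both the series and the series of derivatives `𝓤ₙ₊₁ − 𝓤ₙ 𝓤₁` dominated by a
convergent geometric series. The derivative is then `∑ 𝓤ₙ₊₁ / zⁿ⁺¹ − ∑ 𝓤ₙ 𝓤₁ / zⁿ⁺¹`; shifting the
index turns the first sum into `z 𝓕(z) − 𝓤₀ = z 𝓕(z) − I`, and the second is `𝓕(z) 𝓤₁`.
-/

open Matrix

section MarkovSeries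

variable {𝕜 : Type*} [NormedField 𝕜]

noncomputable def markovFunction {m n : Type*} (V : ℕ → Matrix m n 𝕜) (z : 𝕜) : Matrix m n 𝕜 :=
  of fun i j => ∑' k, V k i j / z ^ (k + 1)

lemma norm_div_pow_succ_le {a z : 𝕜} {C R : ℝ} {n : ℕ} (h : ‖a‖ ≤ C * R ^ n) :
    ‖a / z ^ (n + 1)‖ ≤ C / ‖z‖ * (R / ‖z‖) ^ n :=
  calc ‖a / z ^ (n + 1)‖ = ‖a‖ / ‖z‖ ^ (n + 1) := by rw [norm_div, norm_pow]
    _ ≤ C * R ^ n / ‖z‖ ^ (n + 1) := by gcongr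
    _ = C / ‖z‖ * (R / ‖z‖) ^ n := by rw [div_pow, pow_succ]; ring

lemma summable_mul_geometric_div_norm {z : 𝕜} {R : ℝ} (hR : 0 ≤ R) (hz : R < ‖z‖) (C : ℝ) :
    Summable fun n : ℕ => C / ‖z‖ * (R / ‖z‖) ^ n :=
  (summable_geometric_of_lt_one (div_nonneg hR (hR.trans hz.le))
    ((div_lt_one (hR.trans_lt hz)).mpr hz)).mul_left _

lemma summable_div_pow_succ [CompleteSpace 𝕜] {g : ℕ → 𝕜} {z : 𝕜} {C R : ℝ} (hR : 0 ≤ R)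
    (hz : R < ‖z‖) (hg : ∀ n, ‖g n‖ ≤ C * R ^ n) : Summable fun n => g n / z ^ (n + 1) :=
  (summable_mul_geometric_div_norm hR hz C).of_norm_bounded fun n => norm_div_pow_succ_le (hg n)

lemma HasSum.succ_div_pow_succ {g : ℕ → 𝕜} {z S : 𝕜} (hz : z ≠ 0)
    (hg : HasSum (fun n => g n / z ^ (n + 1)) S) :
    HasSum (fun n => g (n + 1) / z ^ (n + 1)) (z * S - g 0) := by
  have h := ((hasSum_nat_add_iff' 1).mpr hg).mul_left z
  rw [Finset.sum_range_one, _root_.zero_add, pow_one, mul_sub, mul_div_cancel₀ _ hz] at h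
  refine h.congr_fun fun n => ?_
  field_simp
  ring

lemma HasSum.mul_apply_div {l m p : Type*} [Fintype m] {A : ℕ → Matrix l m 𝕜} {S : Matrix l m 𝕜}
    {w : ℕ → 𝕜} (B : Matrix m p 𝕜) (i : l) (j : p)
    (hA : ∀ k, HasSum (fun n => A n i k / w n) (S i k)) :
    HasSum (fun n => (A n * B) i j / w n) ((S * B) i j) := by
  simp only [mul_apply, Finset.sum_div]
  refine hasSum_sum fun k _ => ?_
  exact (hA k).mul_right (B k j) |>.congr_fun fun n => (div_mul_eq_mul_div _ _ _).symm

lemma hasSum_markovFunction_riccati_apply {m : Type*} [Fintype m] [DecidableEq m]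
    {V : ℕ → Matrix m m 𝕜} {z : 𝕜} (hz : z ≠ 0) (hV0 : V 0 = 1)
    (hV : ∀ i j, Summable fun n => V n i j / z ^ (n + 1)) (i j : m) :
    HasSum (fun n => (V (n + 1) - V n * V 1) i j / z ^ (n + 1))
      ((markovFunction V z * (z • 1 - V 1) - 1) i j) := by
  have hF : ∀ i j, HasSum (fun n => V n i j / z ^ (n + 1)) (markovFunction V z i j) :=
    fun i j => (hV i j).hasSum
  have hshift := (hF i j).succ_div_pow_succ hz
  have hprod := HasSum.mul_apply_div (V 1) i j fun k => hF i k
  have hvalue : (markovFunction V z * (z • 1 - V 1) - 1) i j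
      = z * markovFunction V z i j - V 0 i j - (markovFunction V z * V 1) i j := by
    rw [hV0, mul_sub, Matrix.mul_smul, mul_one]
    simp only [Matrix.sub_apply, Matrix.smul_apply, smul_eq_mul]
    ring
  rw [hvalue]
  exact (hshift.sub hprod).congr_fun fun n => by rw [Matrix.sub_apply, sub_div]

lemma norm_mul_apply_le {l m p : Type*} [Fintype m] {A : Matrix l m 𝕜} {B : Matrix m p 𝕜}
    {a b : ℝ} (hA : ∀ i k, ‖A i k‖ ≤ a) (hB : ∀ k j, ‖B k j‖ ≤ b) (i : l) (j : p) :
    ‖(A * B) i j‖ ≤ Fintype.card m * (a * b) :=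
  calc ‖(A * B) i j‖ ≤ ∑ k, ‖A i k * B k j‖ := norm_sum_le _ _
    _ ≤ ∑ _k : m, a * b := Finset.sum_le_sum fun k _ => by
      rw [norm_mul]
      exact mul_le_mul (hA i k) (hB k j) (norm_nonneg _) ((norm_nonneg _).trans (hA i k))
    _ = Fintype.card m * (a * b) := by rw [Finset.sum_const, nsmul_eq_mul, Finset.card_univ]

lemma norm_riccati_apply_le {m : Type*} [Fintype m] {V : ℕ → Matrix m m 𝕜} {K R : ℝ}
    (hV : ∀ n i j, ‖V n i j‖ ≤ K * R ^ n) (n : ℕ) (i j : m) :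
    ‖(V (n + 1) - V n * V 1) i j‖ ≤ (K * R + Fintype.card m * K ^ 2 * R) * R ^ n :=
  calc ‖(V (n + 1) - V n * V 1) i j‖ ≤ ‖V (n + 1) i j‖ + ‖(V n * V 1) i j‖ := norm_sub_le _ _
    _ ≤ K * R ^ (n + 1) + Fintype.card m * (K * R ^ n * (K * R ^ 1)) :=
      add_le_add (hV _ _ _) (norm_mul_apply_le (hV n) (hV 1) i j)
    _ = (K * R + Fintype.card m * K ^ 2 * R) * R ^ n := by ring

end MarkovSeries

lemma hasDerivAt_tsum_div_pow_succ {𝕂 : Type*} [NontriviallyNormedField 𝕂] [NormedAlgebra ℝ 𝕂]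
    [CompleteSpace 𝕂] {u u' : ℕ → ℝ → 𝕂} {z : 𝕂} {C C' R : ℝ} {t : ℝ} (hR : 0 ≤ R)
    (hz : R < ‖z‖) (hu : ∀ n s, HasDerivAt (u n) (u' n s) s) (hu_le : ∀ n, ‖u n t‖ ≤ C * R ^ n)
    (hu'_le : ∀ n s, ‖u' n s‖ ≤ C' * R ^ n) :
    HasDerivAt (fun s => ∑' n, u n s / z ^ (n + 1)) (∑' n, u' n t / z ^ (n + 1)) t :=
  hasDerivAt_tsum (summable_mul_geometric_div_norm hR hz C') (fun n s => (hu n s).div_const _)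
    (fun n s => norm_div_pow_succ_le (hu'_le n s)) (summable_div_pow_succ hR hz hu_le) t

/-- If the moments satisfy `𝓤̇ₙ = 𝓤ₙ₊₁ − 𝓤ₙ𝓤₁`, then the generalized Markov function
`𝓕(z) = Σ 𝓤ₙ/zⁿ⁺¹` satisfies `𝓕̇(z) = 𝓕(z)(zI − 𝓤₁) − I` for `|z| > R`. -/
theorem stmt_3 (U : ℕ → ℝ → Matrix (Fin 2) (Fin 2) ℂ) (K R : ℝ)
    (hU0 : ∀ t, U 0 t = 1)
    (hbound : ∀ (n : ℕ) (t : ℝ) (i j : Fin 2), ‖U n t i j‖ ≤ K * R ^ n)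
    (hderiv : ∀ (n : ℕ) (t : ℝ) (i j : Fin 2),
      HasDerivAt (fun s => U n s i j) ((U (n + 1) t - U n t * U 1 t) i j) t) :
    ∀ (t : ℝ) (z : ℂ), R < ‖z‖ → ∀ i j : Fin 2,
      HasDerivAt (fun s => ∑' n : ℕ, U n s i j / z ^ (n + 1))
        (((Matrix.of fun i j : Fin 2 => ∑' n : ℕ, U n t i j / z ^ (n + 1)) *
            (z • (1 : Matrix (Fin 2) (Fin 2) ℂ) - U 1 t) -
          (1 : Matrix (Fin 2) (Fin 2) ℂ)) i j) t := by
  intro t z hz i j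
  have hR : 0 ≤ R := by
    have hK : 1 ≤ K := by simpa [hU0] using hbound 0 t 0 0
    refine nonneg_of_mul_nonneg_right ?_ (one_pos.trans_le hK)
    simpa using (norm_nonneg _).trans (hbound 1 t 0 0)
  have hz0 : z ≠ 0 := norm_pos_iff.mp (hR.trans_lt hz)
  have hseries := hasDerivAt_tsum_div_pow_succ hR hz (fun n s => hderiv n s i j)
    (fun n => hbound n t i j) (fun n s => norm_riccati_apply_le (hbound · s) n i j)
  have hriccati := hasSum_markovFunction_riccati_apply hz0 (hU0 t)
    (fun i j => summable_div_pow_succ hR hz (hbound · t i j)) i j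
  exact hriccati.tsum_eq ▸ hseries
end

section
/- Explicit solution of the Weyl function Cauchy problem: with M(t), N(t) as above (Ṁ = −(J₋)₁₁M, M(0) = M₀; Ṅ = (J₁₁ − (J₋)₁₁)N, N(0) = I₂, N(t) invertible), define T(t,z) = −∫₀ᵗ e^{−zs} M(s)⁻¹ N(s) ds + M₀⁻¹ R₀(z) and R(t,z) = e^{zt} M(t) T(t,z) N(t)⁻¹. Then R satisfies dR/dt = R·(z·I₂ − J₁₁) − I₂ + [R, (J₋)₁₁] and R(0,z) = R₀(z). -/
/-!
Differentiate `R = e^{zt} M T N⁻¹` by the product rule in a Banach algebra, with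
`(N⁻¹)' = -N⁻¹ N' N⁻¹`. The factor `e^{zt}` contributes `zR`, `M' = -J₋M` contributes `-J₋R`,
`T' = -e^{-zt} M⁻¹N` contributes `-I`, and `N' = (J₁₁ - J₋)N` contributes `-R(J₁₁ - J₋)`.
-/

open Complex (exp)
open scoped Ring

theorem Matrix.hasDerivAt_iff_hasDerivAt_apply {𝕜 E m n : Type*} [NontriviallyNormedField 𝕜]
    [NormedAddCommGroup E] [NormedSpace 𝕜 E] [Fintype m] [Fintype n]
    {f : 𝕜 → Matrix m n E} {f' : Matrix m n E} {t : 𝕜} :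
    HasDerivAt f f' t ↔ ∀ i j, HasDerivAt (fun s => f s i j) (f' i j) t :=
  -- `HasDerivAt` only depends on the topology, so any matrix norm computes the slopes
  letI := Matrix.linftyOpNormedAddCommGroup (m := m) (n := n) (α := E)
  letI := Matrix.linftyOpNormedSpace (m := m) (n := n) (α := E) (R := 𝕜)
  hasDerivAt_iff_tendsto_slope.trans <| tendsto_pi_nhds.trans <| forall_congr' fun _ =>
    tendsto_pi_nhds.trans <| forall_congr' fun _ => hasDerivAt_iff_tendsto_slope.symm

theorem hasDerivAt_lowerUnitriangular {𝕜 E : Type*} [NontriviallyNormedField 𝕜] [NormedRing E]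
    [NormedSpace 𝕜 E] {a : 𝕜 → E} {a' : E} {t : 𝕜} (ha : HasDerivAt a a' t) :
    HasDerivAt (fun s => !![1, 0; a s, 1]) !![0, 0; a', 0] t :=
  Matrix.hasDerivAt_iff_hasDerivAt_apply.mpr fun i j => by
    fin_cases i <;> fin_cases j <;> simp [ha, hasDerivAt_const]

theorem Matrix.hasDerivAt_intervalIntegral_apply {m n E : Type*} [Fintype m] [Fintype n]
    [NormedAddCommGroup E] [NormedSpace ℝ E] [CompleteSpace E] {F : ℝ → Matrix m n E}
    (hF : Continuous F) (a t : ℝ) :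
    HasDerivAt (fun u => Matrix.of fun i j => ∫ s in a..u, F s i j) (F t) t :=
  Matrix.hasDerivAt_iff_hasDerivAt_apply.mpr fun i j =>
    ((hF.matrix_elem i j).integral_hasStrictDerivAt a t).hasDerivAt

section BanachAlgebra

variable {𝔸 : Type*} [NormedRing 𝔸] [HasSummableGeomSeries 𝔸]

theorem HasDerivAt.ringInverse {𝕜 : Type*} [NontriviallyNormedField 𝕜] [NormedAlgebra 𝕜 𝔸]
    {N : 𝕜 → 𝔸} {N' : 𝔸} {t : 𝕜} (hN : HasDerivAt N N' t) (hu : IsUnit (N t)) :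
    HasDerivAt (fun s => (N s)⁻¹ʳ) (-((N t)⁻¹ʳ * N' * (N t)⁻¹ʳ)) t := by
  obtain ⟨u, hu⟩ := hu
  have hl : HasFDerivAt Ring.inverse _ (N t) := hu ▸ hasFDerivAt_ringInverse (𝕜 := 𝕜) u
  rw [← hu, Ring.inverse_unit]
  simpa [Function.comp_def] using hl.comp_hasDerivAt t hN

theorem hasDerivAt_weyl_riccati [NormedAlgebra ℂ 𝔸] {M T N R : ℝ → 𝔸} {J Jm : 𝔸} {z : ℂ}
    {t : ℝ} (hM : HasDerivAt M (-(Jm * M t)) t)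
    (hT : HasDerivAt T (-(exp (-(z * t)) • ((M t)⁻¹ʳ * N t))) t)
    (hN : HasDerivAt N ((J - Jm) * N t) t) (hMu : IsUnit (M t)) (hNu : IsUnit (N t))
    (hR : ∀ s, R s = exp (z * s) • (M s * T s * (N s)⁻¹ʳ)) :
    HasDerivAt R (R t * (z • 1 - J) - 1 + (R t * Jm - Jm * R t)) t := by
  have hexp : HasDerivAt (fun s : ℝ => exp (z * s)) (exp (z * t) * z) t := by
    simpa using ((hasDerivAt_id t).ofReal_comp.const_mul z).cexp
  have hexp_neg : exp (z * t) * exp (-(z * t)) = 1 := by rw [← Complex.exp_add]; simp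
  rw [show R = _ from funext hR]
  refine (hexp.fun_smul ((hM.fun_mul hT).fun_mul (hN.ringInverse hNu))).congr_deriv ?_
  simp only [add_mul, mul_sub, sub_mul, mul_neg, neg_mul, smul_mul_assoc, mul_smul_comm,
    mul_assoc, smul_add, smul_neg, smul_smul, mul_one]
  simp only [← mul_assoc, Ring.mul_inverse_cancel _ hMu, Ring.mul_inverse_cancel _ hNu, mul_one,
    hexp_neg, one_smul]
  module

end BanachAlgebra

theorem stmt_8_general (c₁ a₁ : ℝ → ℂ)
    (ha₁ : ∀ t, HasDerivAt a₁ (c₁ t) t)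
    (J₁₁ : ℝ → Matrix (Fin 2) (Fin 2) ℂ)
    (Jm : ℝ → Matrix (Fin 2) (Fin 2) ℂ)
    (hJm : ∀ t, Jm t = !![0, 0; c₁ t, 0])
    (M : ℝ → Matrix (Fin 2) (Fin 2) ℂ)
    (hM : ∀ t, M t = !![1, 0; -a₁ t, 1])
    (N : ℝ → Matrix (Fin 2) (Fin 2) ℂ)
    (hN0 : N 0 = 1) (hNinv : ∀ t, IsUnit (N t).det)
    (hN : ∀ (t : ℝ) (i j : Fin 2),
      HasDerivAt (fun s => N s i j) (((J₁₁ t - Jm t) * N t) i j) t)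
    (R₀ : ℂ → Matrix (Fin 2) (Fin 2) ℂ)
    (T : ℝ → ℂ → Matrix (Fin 2) (Fin 2) ℂ)
    (hT : ∀ (t : ℝ) (z : ℂ), T t z =
      (Matrix.of fun i j : Fin 2 =>
        -(∫ s in (0:ℝ)..t, Complex.exp (-(z * s)) * ((M s)⁻¹ * N s) i j)) +
      (M 0)⁻¹ * R₀ z)
    (R : ℝ → ℂ → Matrix (Fin 2) (Fin 2) ℂ)
    (hR : ∀ (t : ℝ) (z : ℂ), R t z = Complex.exp (z * t) • (M t * T t z * (N t)⁻¹)) :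
    ∀ z : ℂ, R 0 z = R₀ z ∧
      ∀ (t : ℝ) (i j : Fin 2),
        HasDerivAt (fun s => R s z i j)
          ((R t z * (z • (1 : Matrix (Fin 2) (Fin 2) ℂ) - J₁₁ t) -
              (1 : Matrix (Fin 2) (Fin 2) ℂ) +
            (R t z * Jm t - Jm t * R t z)) i j) t := by
  open scoped Matrix.Norms.Operator in
  simp_rw [Matrix.nonsing_inv_eq_ringInverse] at hT hR
  have hMu (s : ℝ) : IsUnit (M s) := by simp [Matrix.isUnit_iff_isUnit_det, hM]
  have hNu (s : ℝ) : IsUnit (N s) := (Matrix.isUnit_iff_isUnit_det _).mpr (hNinv s)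
  have hMd (s : ℝ) : HasDerivAt M (-(Jm s * M s)) s := by
    have hJmM : -(Jm s * M s) = !![0, 0; -c₁ s, 0] := by
      ext i j; fin_cases i <;> fin_cases j <;> simp [hJm, hM]
    rw [hJmM, show M = fun s => !![1, 0; -a₁ s, 1] from funext hM]
    exact hasDerivAt_lowerUnitriangular (ha₁ s).neg
  have hNd (s : ℝ) : HasDerivAt N ((J₁₁ s - Jm s) * N s) s :=
    Matrix.hasDerivAt_iff_hasDerivAt_apply.mpr (hN s)
  intro z
  have hTd (s : ℝ) : HasDerivAt (fun u => T u z) (-(exp (-(z * s)) • ((M s)⁻¹ʳ * N s))) s := by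
    have hexp : Continuous fun s : ℝ => exp (-(z * s)) := by fun_prop
    have hcont : Continuous fun s : ℝ => exp (-(z * s)) • ((M s)⁻¹ʳ * N s) := by
      refine hexp.smul (.mul ?_ ?_) <;> refine continuous_iff_continuousAt.2 fun s => ?_
      · exact ((hMd s).ringInverse (hMu s)).continuousAt
      · exact (hNd s).continuousAt
    rw [show (fun u => T u z) = _ from funext fun u => hT u z]
    exact (Matrix.hasDerivAt_intervalIntegral_apply hcont 0 s).neg.add_const _
  refine ⟨?_, fun t => Matrix.hasDerivAt_iff_hasDerivAt_apply.mp
    (hasDerivAt_weyl_riccati (hMd t) (hTd t) (hNd t) (hMu t) (hNu t) fun s => hR s z)⟩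
  have hzero : (Matrix.of fun _ _ => (0 : ℂ) : Matrix (Fin 2) (Fin 2) ℂ) = 0 := rfl
  simp [hR, hT, hN0, hzero, Ring.mul_inverse_cancel_left _ _ (hMu 0)]

/-- Explicit solution of the Weyl-function Cauchy problem:
`R(t,z) = e^{zt} M(t) T(t,z) N(t)⁻¹` with `T(t,z) = −∫₀ᵗ e^{−zs}M(s)⁻¹N(s) ds + M₀⁻¹R₀(z)`
satisfies `Ṙ = R(zI − J₁₁) − I + [R,(J₋)₁₁]` and `R(0,z) = R₀(z)`. -/
theorem stmt_8 (b₁ b₂ a₂ c₁ a₁ : ℝ → ℂ)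
    (hb₁ : Continuous b₁) (hb₂ : Continuous b₂) (ha₂ : Continuous a₂) (hc₁ : Continuous c₁)
    (ha₁ : ∀ t, HasDerivAt a₁ (c₁ t) t)
    (J₁₁ : ℝ → Matrix (Fin 2) (Fin 2) ℂ)
    (hJ₁₁ : ∀ t, J₁₁ t = !![b₁ t, a₂ t; c₁ t, b₂ t])
    (Jm : ℝ → Matrix (Fin 2) (Fin 2) ℂ)
    (hJm : ∀ t, Jm t = !![0, 0; c₁ t, 0])
    (M : ℝ → Matrix (Fin 2) (Fin 2) ℂ)
    (hM : ∀ t, M t = !![1, 0; -a₁ t, 1])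
    (N : ℝ → Matrix (Fin 2) (Fin 2) ℂ)
    (hN0 : N 0 = 1) (hNinv : ∀ t, IsUnit (N t).det)
    (hN : ∀ (t : ℝ) (i j : Fin 2),
      HasDerivAt (fun s => N s i j) (((J₁₁ t - Jm t) * N t) i j) t)
    (R₀ : ℂ → Matrix (Fin 2) (Fin 2) ℂ)
    (T : ℝ → ℂ → Matrix (Fin 2) (Fin 2) ℂ)
    (hT : ∀ (t : ℝ) (z : ℂ), T t z =
      (Matrix.of fun i j : Fin 2 =>
        -(∫ s in (0:ℝ)..t, Complex.exp (-(z * s)) * ((M s)⁻¹ * N s) i j)) +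
      (M 0)⁻¹ * R₀ z)
    (R : ℝ → ℂ → Matrix (Fin 2) (Fin 2) ℂ)
    (hR : ∀ (t : ℝ) (z : ℂ), R t z = Complex.exp (z * t) • (M t * T t z * (N t)⁻¹)) :
    ∀ z : ℂ, R 0 z = R₀ z ∧
      ∀ (t : ℝ) (i j : Fin 2),
        HasDerivAt (fun s => R s z i j)
          ((R t z * (z • (1 : Matrix (Fin 2) (Fin 2) ℂ) - J₁₁ t) -
              (1 : Matrix (Fin 2) (Fin 2) ℂ) +
            (R t z * Jm t - Jm t * R t z)) i j) t :=
  stmt_8_general c₁ a₁ ha₁ J₁₁ Jm hJm M hM N hN0 hNinv hN R₀ T hT R hR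
end

section
/- Suppose a family of vector linear functionals 𝓤(t) satisfies 𝓤(t)(𝓟) = (e^{x²t}𝓤⁰)(𝓟)·E(t) where E(t) = [(e^{x²t}𝓤⁰)(𝓟₀)]⁻¹, in the sense that the moments are 𝓤ₙ(t) = Gₙ(t)·E(t) with Gₙ(t) = Σ_{k≥0} (tᵏ/k!)·𝓤⁰ₙ₊ₖ and E(t) = G₀(t)⁻¹. Then the moments satisfy d𝓤ₙ/dt = 𝓤ₙ₊₁ − 𝓤ₙ·𝓤₁ for all n. -/
/-!
Termwise differentiation of the exponential series gives `Gₙ' = Gₙ₊₁`; the exponential bound on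
the moments makes the differentiated series locally uniformly summable. In the Banach algebra of
matrices the inverse `E = G₀⁻¹` has derivative `-E G₀' E = -E G₁ E`, so the product rule gives
`𝓤ₙ' = Gₙ₊₁ E - Gₙ E · G₁ E = 𝓤ₙ₊₁ - 𝓤ₙ 𝓤₁`.
-/

open Nat Ring

section ExpGeneratingFunction

variable {E : Type*} [NormedAddCommGroup E] [NormedSpace ℂ E]

noncomputable def egf (a : ℕ → E) (s : ℝ) : E :=
  ∑' k, ((s : ℂ) ^ k / k !) • a k

theorem natCast_mul_pow_pred_mul_pow_le {x r q : ℝ} (k : ℕ) (hx : 0 ≤ x) (hxr : x ≤ r)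
    (hr : 1 ≤ r) (hq : 0 ≤ q) : k * x ^ (k - 1) * q ^ k ≤ (2 * r * q) ^ k := by
  have hk : (k : ℝ) ≤ 2 ^ k := by exact_mod_cast (Nat.lt_two_pow_self (n := k)).le
  have hxk : x ^ (k - 1) ≤ r ^ k :=
    (pow_le_pow_left₀ hx hxr _).trans (pow_le_pow_right₀ hr (Nat.sub_le k 1))
  rw [mul_pow, mul_pow]
  gcongr

theorem natCast_succ_mul_pow_div_factorial_succ (z : ℂ) (k : ℕ) :
    (k + 1 : ℕ) * z ^ k / (k + 1)! = z ^ k / k ! := by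
  rw [Nat.factorial_succ, Nat.cast_mul, mul_div_mul_left]
  exact_mod_cast Nat.succ_ne_zero k

variable [CompleteSpace E] {a : ℕ → E} {B Q : ℝ}

theorem hasDerivAt_egf (hb : ∀ k, ‖a k‖ ≤ B * Q ^ k) (t : ℝ) :
    HasDerivAt (egf a) (egf (fun k => a (k + 1)) t) t := by
  have hB : 0 ≤ B := by simpa using (norm_nonneg _).trans (hb 0)
  have hb' : ∀ k, ‖a k‖ ≤ B * |Q| ^ k := fun k =>
    (hb k).trans (mul_le_mul_of_nonneg_left ((le_abs_self _).trans (abs_pow Q k).le) hB)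
  set r := |t| + 1
  set g' : ℕ → ℝ → E := fun k s => (k * (s : ℂ) ^ (k - 1) / k !) • a k
  have hderiv : ∀ k (s : ℝ), HasDerivAt (fun s : ℝ => ((s : ℂ) ^ k / k !) • a k) (g' k s) s :=
    fun k s => (((hasDerivAt_pow k (s : ℂ)).div_const _).comp_ofReal).smul_const (a k)
  have hbound : ∀ k, ∀ s ∈ Set.Ioo (-r) r, ‖g' k s‖ ≤ B * ((2 * r * |Q|) ^ k / k !) := by
    intro k s hs
    have hsr : |s| ≤ r := (abs_lt.2 hs).le
    calc ‖g' k s‖ = k * |s| ^ (k - 1) / k ! * ‖a k‖ := by simp [g', norm_smul]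
      _ ≤ k * |s| ^ (k - 1) / k ! * (B * |Q| ^ k) := by gcongr; exact hb' k
      _ = B * (k * |s| ^ (k - 1) * |Q| ^ k / k !) := by ring
      _ ≤ B * ((2 * r * |Q|) ^ k / k !) := by
        gcongr
        exact natCast_mul_pow_pred_mul_pow_le k (abs_nonneg s) hsr (by simp [r]) (abs_nonneg Q)
  have hsummable : Summable fun k => B * ((2 * r * |Q|) ^ k / k !) :=
    (Real.summable_pow_div_factorial _).mul_left B
  have hr : 0 < r := by positivity
  have ht : t ∈ Set.Ioo (-r) r := abs_lt.1 (by simp [r])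
  have hzero : Summable fun k => (((0 : ℝ) : ℂ) ^ k / k !) • a k :=
    summable_of_ne_finset_zero (s := {0}) fun k hk => by simp_all
  have hsum' : Summable fun k => g' k t := .of_norm_bounded hsummable fun k => hbound k t ht
  have hshift : ∑' k, g' k t = egf (fun k => a (k + 1)) t := by
    rw [hsum'.tsum_eq_zero_add]
    simp only [g', egf, ← natCast_succ_mul_pow_div_factorial_succ]
    simp
  rw [← hshift]
  exact hasDerivAt_tsum_of_isPreconnected hsummable isOpen_Ioo isPreconnected_Ioo
    (fun k s _ => hderiv k s) hbound ⟨neg_lt_zero.2 hr, hr⟩ hzero ht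

end ExpGeneratingFunction

section Inverse

variable {R : Type*} [NormedRing R] [HasSummableGeomSeries R] [NormedAlgebra ℝ R]
  {f g : ℝ → R} {f' g' : R} {t : ℝ}

theorem HasDerivAt.ringInverse_s9 (hg : HasDerivAt g g' t) (ht : IsUnit (g t)) :
    HasDerivAt (fun s => (g s)⁻¹ʳ) (-((g t)⁻¹ʳ * g' * (g t)⁻¹ʳ)) t := by
  obtain ⟨u, hu⟩ := ht
  have := (hu ▸ hasFDerivAt_ringInverse (𝕜 := ℝ) u).comp_hasDerivAt t hg
  rw [← hu, Ring.inverse_unit]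
  exact this

theorem HasDerivAt.mul_ringInverse (hf : HasDerivAt f f' t) (hg : HasDerivAt g g' t)
    (ht : IsUnit (g t)) :
    HasDerivAt (fun s => f s * (g s)⁻¹ʳ)
      (f' * (g t)⁻¹ʳ - f t * (g t)⁻¹ʳ * (g' * (g t)⁻¹ʳ)) t := by
  convert hf.fun_mul (hg.ringInverse_s9 ht) using 1
  noncomm_ring

end Inverse

section MatrixEntries

-- Any algebra norm would do: in finite dimension, differentiability is read off the entries.
attribute [local instance] Matrix.linftyOpNormedRing Matrix.linftyOpNormedAlgebra

variable {𝕜 n : Type*} [RCLike 𝕜] [Fintype n] [DecidableEq n]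
  {M : ℝ → Matrix n n 𝕜} {M' : Matrix n n 𝕜} {t : ℝ}

theorem hasDerivAt_matrix_of_entries (h : ∀ i j, HasDerivAt (fun s => M s i j) (M' i j) t) :
    HasDerivAt M M' t := by
  have key : ∀ N : Matrix n n 𝕜, N = ∑ i, ∑ j, N i j • Matrix.single i j 1 := fun N => by
    simpa [Matrix.smul_single] using N.matrix_eq_sum_single
  rw [funext fun s => key (M s), key M']
  exact HasDerivAt.fun_sum fun i _ => HasDerivAt.fun_sum fun j _ => (h i j).smul_const _

theorem HasDerivAt.matrix_apply (h : HasDerivAt M M' t) (i j : n) :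
    HasDerivAt (fun s => M s i j) (M' i j) t :=
  (LinearMap.toContinuousLinearMap (Matrix.entryLinearMap ℝ 𝕜 i j)).hasFDerivAt
    |>.comp_hasDerivAt t h

theorem hasDerivAt_mul_nonsingInv_apply {F G : ℝ → Matrix n n 𝕜} {F' G' : Matrix n n 𝕜}
    (hF : ∀ i j, HasDerivAt (fun s => F s i j) (F' i j) t)
    (hG : ∀ i j, HasDerivAt (fun s => G s i j) (G' i j) t) (ht : IsUnit (G t).det) (i j : n) :
    HasDerivAt (fun s => (F s * (G s)⁻¹) i j)
      ((F' * (G t)⁻¹ - F t * (G t)⁻¹ * (G' * (G t)⁻¹)) i j) t := by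
  simp only [Matrix.nonsing_inv_eq_ringInverse]
  exact ((hasDerivAt_matrix_of_entries hF).mul_ringInverse (hasDerivAt_matrix_of_entries hG)
    ((Matrix.isUnit_iff_isUnit_det _).2 ht)).matrix_apply i j

end MatrixEntries

/-- If `𝓤ₙ(t) = Gₙ(t)·G₀(t)⁻¹` with `Gₙ(t) = Σₖ (tᵏ/k!)·𝓤⁰ₙ₊ₖ`, then the moments satisfy
`𝓤̇ₙ = 𝓤ₙ₊₁ − 𝓤ₙ·𝓤₁`. -/
theorem stmt_9 (U0 : ℕ → Matrix (Fin 2) (Fin 2) ℂ) (C R : ℝ)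
    (hbound : ∀ (n : ℕ) (i j : Fin 2), ‖U0 n i j‖ ≤ C * R ^ n)
    (G : ℕ → ℝ → Matrix (Fin 2) (Fin 2) ℂ)
    (hG : ∀ (n : ℕ) (t : ℝ), G n t =
      Matrix.of fun i j : Fin 2 =>
        ∑' k : ℕ, ((t : ℂ) ^ k / (Nat.factorial k : ℂ)) * U0 (n + k) i j)
    (hinv : ∀ t : ℝ, IsUnit (G 0 t).det)
    (U : ℕ → ℝ → Matrix (Fin 2) (Fin 2) ℂ)
    (hU : ∀ (n : ℕ) (t : ℝ), U n t = G n t * (G 0 t)⁻¹) :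
    ∀ (n : ℕ) (t : ℝ) (i j : Fin 2),
      HasDerivAt (fun s => U n s i j) ((U (n + 1) t - U n t * U 1 t) i j) t := by
  intro n t i j
  have hGderiv : ∀ m (p q : Fin 2), HasDerivAt (fun s => G m s p q) (G (m + 1) t p q) t := by
    intro m p q
    have hentry : ∀ l s, G l s p q = egf (fun k => U0 (l + k) p q) s := fun l s => by
      rw [hG]; rfl
    have hb : ∀ k, ‖U0 (m + k) p q‖ ≤ C * R ^ m * R ^ k := fun k => by
      rw [mul_assoc, ← pow_add]; exact hbound _ p q
    simp only [hentry, add_right_comm m 1]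
    exact hasDerivAt_egf hb t
  simpa only [hU] using hasDerivAt_mul_nonsingInv_apply (hGderiv n) (hGderiv 0) (hinv t) i j
end

section
/- If dJ/dt = J·J₋ − J₋·J holds for a block tridiagonal matrix J with strictly lower part J₋ (block subdiagonal), then the (1,1) block satisfies d(Jⁿ)₁₁/dt = (Jⁿ⁺¹)₁₁ − (Jⁿ)₁₁·J₁₁ + (Jⁿ)₁₁·(J₋)₁₁ − (J₋)₁₁·(Jⁿ)₁₁ for all n ∈ ℕ. -/
/-- Product of two infinite block matrices (entries are 2×2 complex blocks). -/
noncomputable def blockMul (X Y : ℕ → ℕ → Matrix (Fin 2) (Fin 2) ℂ) :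
    ℕ → ℕ → Matrix (Fin 2) (Fin 2) ℂ :=
  fun i j => ∑' k : ℕ, X i k * Y k j

/-- Powers of an infinite block matrix. -/
noncomputable def blockPow (J : ℕ → ℕ → Matrix (Fin 2) (Fin 2) ℂ) : ℕ → ℕ → ℕ → Matrix (Fin 2) (Fin 2) ℂ
  | 0 => fun i j => if i = j then 1 else 0
  | n + 1 => blockMul (blockPow J n) J

/-- Strictly lower triangular part of a 2×2 block. -/
def lowerPart (X : Matrix (Fin 2) (Fin 2) ℂ) : Matrix (Fin 2) (Fin 2) ℂ :=
  !![0, 0; X 1 0, 0]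

/-- The strictly lower (scalar-)triangular part `J₋` of a block tridiagonal matrix. -/
noncomputable def blockMinus (J : ℕ → ℕ → Matrix (Fin 2) (Fin 2) ℂ) :
    ℕ → ℕ → Matrix (Fin 2) (Fin 2) ℂ :=
  fun i j => if i = j then lowerPart (J i i) else if i = j + 1 then J i j else 0

/-!
All matrices involved are row-banded (`X i k = 0` for `k > i + m`), so every block product is
a finite sum; hence block multiplication is associative and distributes over subtraction on
them. The Lax equation `J̇ = [J, L]` then propagates to powers by the product rule:
`(Jⁿ)˙ = [Jⁿ, L]`. At the `(0,0)` block with `L = J₋`, row `0` of `J₋` is just `(J₋)₀₀`, while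
column `0` of both `J₋` and `J` consists of its diagonal block and the common subdiagonal block
`J₁₀`; so `(JⁿJ₋)₀₀ = (Jⁿ)₀₀(J₋)₀₀ + (Jⁿ⁺¹)₀₀ − (Jⁿ)₀₀J₀₀` and `(J₋Jⁿ)₀₀ = (J₋)₀₀(Jⁿ)₀₀`.
-/

local notation "BlockMat" => ℕ → ℕ → Matrix (Fin 2) (Fin 2) ℂ

def RowBand (X : BlockMat) (m : ℕ) : Prop :=
  ∀ i k, i + m < k → X i k = 0

namespace RowBand

variable {X Y Z : BlockMat} {m m' : ℕ}

theorem blockMul_eq_sum (hX : RowBand X m) (Y : BlockMat) (i j : ℕ) :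
    blockMul X Y i j = ∑ k ∈ Finset.range (i + m + 1), X i k * Y k j :=
  tsum_eq_sum fun k hk => by
    rw [hX i k (by simpa [Nat.lt_succ_iff] using hk), zero_mul]

theorem mono (hX : RowBand X m) (h : m ≤ m') : RowBand X m' :=
  fun i k hik => hX i k (by omega)

theorem sub (hX : RowBand X m) (hY : RowBand Y m) : RowBand (X - Y) m := fun i k hik => by
  simp [hX i k hik, hY i k hik]

theorem mul (hX : RowBand X m) (hY : RowBand Y m') : RowBand (blockMul X Y) (m + m') :=
  fun i k hik => by
    rw [hX.blockMul_eq_sum]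
    refine Finset.sum_eq_zero fun l hl => ?_
    rw [hY l k (by simp only [Finset.mem_range] at hl; omega), mul_zero]

theorem pow {J : BlockMat} (hJ : RowBand J m) (n : ℕ) : RowBand (blockPow J n) (n * m) := by
  induction n with
  | zero => exact fun i k hik => if_neg (by omega)
  | succ n ih => simpa [blockPow, add_one_mul] using ih.mul hJ

theorem blockMul_assoc (hX : RowBand X m) (hY : RowBand Y m') :
    blockMul (blockMul X Y) Z = blockMul X (blockMul Y Z) := by
  ext1 i; ext1 j
  simp only [(hX.mul hY).blockMul_eq_sum, hX.blockMul_eq_sum, hY.blockMul_eq_sum,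
    Finset.mul_sum, Finset.sum_mul, mul_assoc]
  rw [Finset.sum_comm]
  refine Finset.sum_congr rfl fun l hl => (Finset.sum_subset ?_ fun k _ hk => ?_).symm
  · intro k hk
    simp only [Finset.mem_range] at hl hk ⊢
    omega
  · rw [hY l k (by simpa using hk), zero_mul, mul_zero]

theorem blockMul_sub_left (hX : RowBand X m) (hY : RowBand Y m) :
    blockMul (X - Y) Z = blockMul X Z - blockMul Y Z := by
  funext i j
  simp only [Pi.sub_apply, (hX.sub hY).blockMul_eq_sum, hX.blockMul_eq_sum,
    hY.blockMul_eq_sum, ← Finset.sum_sub_distrib, sub_mul]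

theorem blockMul_sub_right (hX : RowBand X m) :
    blockMul X (Y - Z) = blockMul X Y - blockMul X Z := by
  funext i j
  simp only [Pi.sub_apply, hX.blockMul_eq_sum, ← Finset.sum_sub_distrib, mul_sub]

end RowBand

theorem hasDerivAt_blockMul {X Y : ℝ → BlockMat} {X' Y' : BlockMat} {m : ℕ} {t : ℝ}
    (hX : ∀ s, RowBand (X s) m) (hX' : RowBand X' m)
    (dX : ∀ i k a c, HasDerivAt (fun s => X s i k a c) (X' i k a c) t)
    (dY : ∀ k j c b, HasDerivAt (fun s => Y s k j c b) (Y' k j c b) t) (i j : ℕ) (a b : Fin 2) :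
    HasDerivAt (fun s => blockMul (X s) (Y s) i j a b)
      ((blockMul X' (Y t) + blockMul (X t) Y') i j a b) t := by
  have entry : ∀ Z W : BlockMat, RowBand Z m →
      blockMul Z W i j a b = ∑ k ∈ Finset.range (i + m + 1), ∑ c, Z i k a c * W k j c b :=
    fun Z W hZ => by simp only [hZ.blockMul_eq_sum, Matrix.sum_apply, Matrix.mul_apply]
  simp only [entry _ _ (hX _), Pi.add_apply, Matrix.add_apply, entry _ _ hX',
    ← Finset.sum_add_distrib]
  exact HasDerivAt.fun_sum fun k _ => HasDerivAt.fun_sum fun c _ =>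
    (dX i k a c).mul (dY k j c b)

theorem rowBand_blockMinus (J : BlockMat) : RowBand (blockMinus J) 0 :=
  fun i k hik => by simp only [blockMinus]; rw [if_neg (by omega), if_neg (by omega)]

theorem blockMinus_col_zero_of_one_lt (J : BlockMat) :
    ∀ k, 1 < k → blockMinus J k 0 = 0 := fun k hk => by
  simp only [blockMinus]; rw [if_neg (by omega), if_neg (by omega)]

theorem blockMinus_one_zero (J : BlockMat) : blockMinus J 1 0 = J 1 0 := by
  simp [blockMinus]

theorem blockMinus_row_zero_of_ne_zero (J : BlockMat) {k : ℕ} (hk : k ≠ 0) :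
    blockMinus J 0 k = 0 := by
  simp only [blockMinus]; rw [if_neg (Ne.symm hk), if_neg (by omega)]

theorem blockMul_zero_zero_of_col_zero {X Y : BlockMat}
    (hY : ∀ k, 1 < k → Y k 0 = 0) : blockMul X Y 0 0 = X 0 0 * Y 0 0 + X 0 1 * Y 1 0 := by
  rw [blockMul, tsum_eq_sum (s := {0, 1}) fun k hk => by
    rw [hY k (by simp only [Finset.mem_insert, Finset.mem_singleton] at hk; omega), mul_zero]]
  exact Finset.sum_pair zero_ne_one

theorem blockMinus_blockMul_zero_zero (J X : BlockMat) :
    blockMul (blockMinus J) X 0 0 = blockMinus J 0 0 * X 0 0 :=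
  tsum_eq_single 0 fun k hk => by rw [blockMinus_row_zero_of_ne_zero J hk, zero_mul]

theorem blockMul_blockPow_zero_left (J Y : BlockMat) :
    blockMul (blockPow J 0) Y = Y := by
  funext i j
  rw [blockMul, tsum_eq_single i fun k hk => by simp [blockPow, Ne.symm hk]]
  simp [blockPow]

theorem blockMul_blockPow_zero_right (J Y : BlockMat) :
    blockMul Y (blockPow J 0) = Y := by
  funext i j
  rw [blockMul, tsum_eq_single j fun k hk => by simp [blockPow, hk]]
  simp [blockPow]

theorem hasDerivAt_blockPow_of_lax {J L : ℝ → BlockMat} {m m' : ℕ}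
    (hJ : ∀ t, RowBand (J t) m) (hL : ∀ t, RowBand (L t) m')
    (hlax : ∀ t i j a b, HasDerivAt (fun s => J s i j a b)
      ((blockMul (J t) (L t) - blockMul (L t) (J t)) i j a b) t) (n : ℕ) (t : ℝ) :
    ∀ i j a b, HasDerivAt (fun s => blockPow (J s) n i j a b)
      ((blockMul (blockPow (J t) n) (L t) - blockMul (L t) (blockPow (J t) n)) i j a b) t := by
  induction n generalizing t with
  | zero =>
    intro i j a b
    rw [blockMul_blockPow_zero_left, blockMul_blockPow_zero_right, sub_self]
    exact hasDerivAt_const t (blockPow (J t) 0 i j a b)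
  | succ n ih =>
    have hPn := (hJ t).pow n
    have hP : ∀ s, RowBand (blockPow (J s) n) (n * m + m') :=
      fun s => ((hJ s).pow n).mono (by omega)
    have hPL := hPn.mul (hL t)
    have hLP := ((hL t).mul hPn).mono (m' := n * m + m') (by omega)
    have commutator :
        blockMul (blockPow (J t) (n + 1)) (L t) - blockMul (L t) (blockPow (J t) (n + 1)) =
          blockMul (blockMul (blockPow (J t) n) (L t) - blockMul (L t) (blockPow (J t) n)) (J t) +
            blockMul (blockPow (J t) n) (blockMul (J t) (L t) - blockMul (L t) (J t)) := by
      rw [hPL.blockMul_sub_left hLP, hPn.blockMul_sub_right, hPn.blockMul_assoc (hL t),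
        (hL t).blockMul_assoc hPn, blockPow, hPn.blockMul_assoc (hJ t)]
      abel
    rw [commutator]
    exact hasDerivAt_blockMul hP (hPL.sub hLP) (ih t) (hlax t)

/-- If `J̇ = J·J₋ − J₋·J`, then
`d(Jⁿ)₁₁/dt = (Jⁿ⁺¹)₁₁ − (Jⁿ)₁₁J₁₁ + (Jⁿ)₁₁(J₋)₁₁ − (J₋)₁₁(Jⁿ)₁₁`. -/
theorem stmt_12 (J : ℝ → ℕ → ℕ → Matrix (Fin 2) (Fin 2) ℂ)
    (hband : ∀ (t : ℝ) (i j : ℕ), J t i j ≠ 0 → (i ≤ j + 1 ∧ j ≤ i + 1))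
    (hlax : ∀ (t : ℝ) (i j : ℕ) (a b : Fin 2),
      HasDerivAt (fun s => J s i j a b)
        ((blockMul (J t) (blockMinus (J t)) i j -
          blockMul (blockMinus (J t)) (J t) i j) a b) t) :
    ∀ (n : ℕ) (t : ℝ) (a b : Fin 2),
      HasDerivAt (fun s => blockPow (J s) n 0 0 a b)
        ((blockPow (J t) (n + 1) 0 0 - blockPow (J t) n 0 0 * J t 0 0 +
          (blockPow (J t) n 0 0 * blockMinus (J t) 0 0 -
            blockMinus (J t) 0 0 * blockPow (J t) n 0 0)) a b) t := by
  intro n t a b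
  have hJ : ∀ t, RowBand (J t) 1 := fun t i k hik =>
    not_not.1 fun h => absurd (hband t i k h).2 (by omega)
  have hcol : ∀ k, 1 < k → J t k 0 = 0 := fun k hk =>
    not_not.1 fun h => absurd (hband t k 0 h).1 (by omega)
  have hpow := hasDerivAt_blockPow_of_lax hJ (fun t => rowBand_blockMinus (J t)) hlax n t 0 0 a b
  simp only [Pi.sub_apply] at hpow
  rw [blockMul_zero_zero_of_col_zero (blockMinus_col_zero_of_one_lt (J t)),
    blockMinus_blockMul_zero_zero, blockMinus_one_zero] at hpow
  rw [blockPow, blockMul_zero_zero_of_col_zero hcol]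
  convert hpow using 2
  simp only [Matrix.add_apply, Matrix.sub_apply]
  ring
end

section
/- Moment extraction from eigenrelation: under the hypotheses of the previous statement, if additionally 𝓤 is a vector of linear functionals with orthogonality (x^{2k}𝓤)(𝓑ₘ) = 0 for k < m and 𝓤(𝓑₀) invertible, then the (1,1) block of Jⁿ satisfies (Jⁿ)₁₁ = (x^{2n}𝓤)(𝓑₀)·(𝓤(𝓑₀))⁻¹ for all n ∈ ℕ. -/
open Polynomial

/-- The vector of linear functionals `𝓤 = [u¹ u²]ᵀ` applied to a vector polynomial:
`𝓤(𝓟)ᵢⱼ = ⟨uʲ, pᵢ⟩`. -/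
noncomputable def Uapp (u : Fin 2 → (Polynomial ℂ →ₗ[ℂ] ℂ))
    (P : Matrix (Fin 2) (Fin 1) (Polynomial ℂ)) : Matrix (Fin 2) (Fin 2) ℂ :=
  Matrix.of fun i j => u j (P i 0)

/-!
Iterating the eigenrelation `x²𝓑 = J𝓑` gives `x²ⁿ𝓑₀ = ∑ⱼ (Jⁿ)₀ⱼ 𝓑ⱼ`, a finite sum since `Jⁿ`
is banded. Applying `𝓤`, orthogonality with `k = 0` kills every term but `(Jⁿ)₀₀ 𝓤(𝓑₀)`,
and `𝓤(𝓑₀)` is invertible.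
-/

open Finset

section Uapp

variable (u : Fin 2 → (Polynomial ℂ →ₗ[ℂ] ℂ))

lemma Uapp_sum {ι : Type*} (s : Finset ι) (f : ι → Matrix (Fin 2) (Fin 1) (Polynomial ℂ)) :
    Uapp u (∑ k ∈ s, f k) = ∑ k ∈ s, Uapp u (f k) := by
  ext i j
  simp [Uapp, Matrix.sum_apply]

lemma Uapp_map_C_mul (M : Matrix (Fin 2) (Fin 2) ℂ) (P : Matrix (Fin 2) (Fin 1) (Polynomial ℂ)) :
    Uapp u (M.map C * P) = M * Uapp u P := by
  ext i j
  simp only [Uapp, Matrix.of_apply, Matrix.mul_apply, Matrix.map_apply, map_sum,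
    ← smul_eq_C_mul, map_smul, smul_eq_mul]

end Uapp

section Banded

variable {J : ℕ → ℕ → Matrix (Fin 2) (Fin 2) ℂ} (hJ : ∀ i j, i + 1 < j → J i j = 0)
include hJ

lemma blockPow_eq_zero_of_lt (n : ℕ) : ∀ i j, i + n < j → blockPow J n i j = 0 := by
  induction n with
  | zero => intro i j hij; exact if_neg (by omega)
  | succ n ih =>
    intro i j hij
    have hterm : ∀ k, blockPow J n i k * J k j = 0 := fun k => by
      by_cases hk : i + n < k
      · rw [ih i k hk, zero_mul]
      · rw [hJ k j (by omega), mul_zero]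
    simp [blockPow, blockMul, hterm]

lemma blockPow_succ_eq_sum (n i j : ℕ) :
    blockPow J (n + 1) i j = ∑ k ∈ range (i + n + 1), blockPow J n i k * J k j :=
  tsum_eq_sum fun k hk => by
    rw [blockPow_eq_zero_of_lt hJ n i k (by simpa using hk), zero_mul]

variable {Bv : ℕ → Matrix (Fin 2) (Fin 1) (Polynomial ℂ)}

lemma sum_range_map_C_mul_eq_of_lt (k N : ℕ) (hkN : k + 1 < N) :
    ∑ j ∈ range N, (J k j).map C * Bv j = ∑ j ∈ range (k + 2), (J k j).map C * Bv j := by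
  refine (sum_subset (range_subset_range.mpr (by omega)) fun j _ hj => ?_).symm
  rw [hJ k j (by rw [mem_range] at hj; omega), Matrix.map_zero _ (map_zero C), Matrix.zero_mul]

/-- The recurrence read as the eigenrelation `x²𝓑 = J𝓑`, row `k` of `J` truncated to any
`range N` containing its support. -/
lemma sq_smul_eq_sum_of_recurrence {A B C' : ℕ → Matrix (Fin 2) (Fin 2) ℂ}
    (hJd : ∀ m, J m m = B m) (hJu : ∀ m, J m (m + 1) = A m)
    (hJl : ∀ m, J (m + 1) m = C' (m + 1)) (hJ' : ∀ i j, j + 1 < i → J i j = 0)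
    (hrec0 : (X ^ 2 : ℂ[X]) • Bv 0 = (A 0).map C * Bv 1 + (B 0).map C * Bv 0)
    (hrec : ∀ m, 1 ≤ m → (X ^ 2 : ℂ[X]) • Bv m =
      (A m).map C * Bv (m + 1) + (B m).map C * Bv m + (C' m).map C * Bv (m - 1))
    (k N : ℕ) (hkN : k + 1 < N) :
    (X ^ 2 : ℂ[X]) • Bv k = ∑ j ∈ range N, (J k j).map C * Bv j := by
  rw [sum_range_map_C_mul_eq_of_lt hJ k N hkN]
  rcases k with _ | m
  · rw [sum_range_succ, sum_range_one, hJd, hJu, hrec0, add_comm]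
  · have hlow : ∑ j ∈ range m, (J (m + 1) j).map C * Bv j = 0 :=
      sum_eq_zero fun j hj => by
        rw [hJ' (m + 1) j (by simpa using hj), Matrix.map_zero _ (map_zero C), Matrix.zero_mul]
    rw [show m + 1 + 2 = m + 3 from rfl, sum_range_succ, sum_range_succ, sum_range_succ, hlow,
      hJl, hJd, hJu, hrec (m + 1) (by omega), Nat.add_sub_cancel]
    abel

lemma pow_smul_eq_sum_blockPow
    (hrow : ∀ k N, k + 1 < N → (X ^ 2 : ℂ[X]) • Bv k = ∑ j ∈ range N, (J k j).map C * Bv j)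
    (n i : ℕ) :
    (X ^ (2 * n) : ℂ[X]) • Bv i = ∑ j ∈ range (i + n + 1), (blockPow J n i j).map C * Bv j := by
  induction n with
  | zero =>
    rw [sum_eq_single_of_mem i (by simp) fun j _ hj => by simp [blockPow, Ne.symm hj]]
    simp [blockPow]
  | succ n ih =>
    calc (X ^ (2 * (n + 1)) : ℂ[X]) • Bv i
        = ∑ k ∈ range (i + n + 1), (blockPow J n i k).map C * ((X ^ 2 : ℂ[X]) • Bv k) := by
          rw [mul_add, mul_one, add_comm, pow_add, mul_smul, ih, smul_sum]
          simp only [Matrix.mul_smul]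
      _ = ∑ k ∈ range (i + n + 1), ∑ j ∈ range (i + (n + 1) + 1),
            (blockPow J n i k).map C * ((J k j).map C * Bv j) := by
          refine sum_congr rfl fun k hk => ?_
          rw [hrow k (i + (n + 1) + 1) (by rw [mem_range] at hk; omega), Matrix.mul_sum]
      _ = ∑ j ∈ range (i + (n + 1) + 1), (blockPow J (n + 1) i j).map C * Bv j := by
          rw [sum_comm]
          refine sum_congr rfl fun j _ => ?_
          simp only [blockPow_succ_eq_sum hJ, ← RingHom.mapMatrix_apply, map_sum, map_mul,
            Matrix.sum_mul, Matrix.mul_assoc]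

lemma Uapp_pow_smul_eq_blockPow_mul
    (hrow : ∀ k N, k + 1 < N → (X ^ 2 : ℂ[X]) • Bv k = ∑ j ∈ range N, (J k j).map C * Bv j)
    (u : Fin 2 → (Polynomial ℂ →ₗ[ℂ] ℂ)) (hU : ∀ m, 0 < m → Uapp u (Bv m) = 0) (n : ℕ) :
    Uapp u ((X ^ (2 * n) : ℂ[X]) • Bv 0) = blockPow J n 0 0 * Uapp u (Bv 0) := by
  rw [pow_smul_eq_sum_blockPow hJ hrow, Uapp_sum, sum_eq_single_of_mem 0 (by simp)]
  · rw [Uapp_map_C_mul]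
  · intro j _ hj
    rw [Uapp_map_C_mul, hU j (Nat.pos_of_ne_zero hj), Matrix.mul_zero]

end Banded

/-- Moment extraction: with orthogonality `(x²ᵏ𝓤)(𝓑ₘ) = 0` for `k < m` and `𝓤(𝓑₀)`
invertible, the `(1,1)` block of `Jⁿ` is `(x²ⁿ𝓤)(𝓑₀)·(𝓤(𝓑₀))⁻¹`. -/
theorem stmt_16 (A B C : ℕ → Matrix (Fin 2) (Fin 2) ℂ)
    (J : ℕ → ℕ → Matrix (Fin 2) (Fin 2) ℂ)
    (hJd : ∀ m, J m m = B m) (hJu : ∀ m, J m (m + 1) = A m)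
    (hJl : ∀ m, J (m + 1) m = C (m + 1))
    (hJ0 : ∀ i j : ℕ, (i + 1 < j ∨ j + 1 < i) → J i j = 0)
    (Bv : ℕ → Matrix (Fin 2) (Fin 1) (Polynomial ℂ))
    (hrec0 : (X ^ 2 : Polynomial ℂ) • Bv 0 =
      (A 0).map Polynomial.C * Bv 1 + (B 0).map Polynomial.C * Bv 0)
    (hrec : ∀ (m : ℕ), 1 ≤ m →
      (X ^ 2 : Polynomial ℂ) • Bv m =
        (A m).map Polynomial.C * Bv (m + 1) + (B m).map Polynomial.C * Bv m +
          (C m).map Polynomial.C * Bv (m - 1))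
    (u : Fin 2 → (Polynomial ℂ →ₗ[ℂ] ℂ))
    (horth : ∀ (m k : ℕ), k < m → Uapp u ((X ^ (2 * k) : Polynomial ℂ) • Bv m) = 0)
    (hinv : IsUnit (Uapp u (Bv 0)).det) :
    ∀ n : ℕ, blockPow J n 0 0 =
      Uapp u ((X ^ (2 * n) : Polynomial ℂ) • Bv 0) * (Uapp u (Bv 0))⁻¹ := by
  intro n
  have hup : ∀ i j, i + 1 < j → J i j = 0 := fun i j h => hJ0 i j (Or.inl h)
  have hrow := sq_smul_eq_sum_of_recurrence hup hJd hJu hJl (fun i j h => hJ0 i j (Or.inr h))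
    hrec0 hrec
  have hU : ∀ m, 0 < m → Uapp u (Bv m) = 0 := fun m hm => by
    simpa only [mul_zero, pow_zero, one_smul] using horth m 0 hm
  rw [Uapp_pow_smul_eq_blockPow_mul hup hrow u hU, Matrix.mul_assoc,
    Matrix.mul_nonsing_inv _ hinv, Matrix.mul_one]
end
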